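/- arXiv:2403.04494 — 3 statements merged into one kernel-verified Lean document; each statement's English description precedes it below -/
import Mathlib

section
/- Let x be a positive light-like vector in R^{n+1}, S the horosphere it determines, and u₀, u₁ ∈ S. Then -2(1 + u₀∘u₁) ≥ 0, and setting d_S(u₀,u₁) = √(-2(1 + u₀∘u₁)) and cosh d_H(u₀,u₁) = -u₀∘u₁, one has d_S(u₀,u₁)/2 = sinh(d_H(u₀,u₁)/2). -/
/-- The Lorentzian inner product on `ℝ^{n+1}`. -/
def lprod {n : ℕ} (x y : Fin (n + 1) → ℝ) : ℝ :=
  -(x 0 * y 0) + ∑ i : Fin n, x i.succ * y i.succ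

/-- Comparison between intrinsic horospherical distance and hyperbolic
distance: `d_S(u₀,u₁)/2 = sinh(d_H(u₀,u₁)/2)`. -/
theorem horospherical_vs_hyperbolic_distance {n : ℕ} (x u₀ u₁ : Fin (n + 1) → ℝ)
    (hxx : lprod x x = 0) (hx0 : 0 < x 0)
    (hu₀H : lprod u₀ u₀ = -1) (hu₀pos : 0 < u₀ 0) (hu₀S : lprod u₀ x = -1)
    (hu₁H : lprod u₁ u₁ = -1) (hu₁pos : 0 < u₁ 0) (hu₁S : lprod u₁ x = -1) :
    0 ≤ -2 * (1 + lprod u₀ u₁) ∧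
    ∀ d : ℝ, 0 ≤ d → Real.cosh d = -lprod u₀ u₁ →
      Real.sqrt (-2 * (1 + lprod u₀ u₁)) / 2 = Real.sinh (d / 2) := by
  -- Key fact: lprod u₀ u₁ ≤ -1
  have key : lprod u₀ u₁ ≤ -1 := by
    set a := u₀ 0
    set b := u₁ 0
    set A := ∑ i : Fin n, u₀ i.succ ^ 2 with hA
    set B := ∑ i : Fin n, u₁ i.succ ^ 2 with hB
    set P := ∑ i : Fin n, u₀ i.succ * u₁ i.succ with hP
    have hAnn : 0 ≤ A := Finset.sum_nonneg fun i _ => sq_nonneg _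
    have hBnn : 0 ≤ B := Finset.sum_nonneg fun i _ => sq_nonneg _
    have hA' : A = a ^ 2 - 1 := by
      have := hu₀H
      simp only [lprod] at this
      have h2 : ∑ i : Fin n, u₀ i.succ * u₀ i.succ = A := by
        rw [hA]; exact Finset.sum_congr rfl fun i _ => (sq (u₀ i.succ)).symm
      nlinarith [this, h2]
    have hB' : B = b ^ 2 - 1 := by
      have := hu₁H
      simp only [lprod] at this
      have h2 : ∑ i : Fin n, u₁ i.succ * u₁ i.succ = B := by
        rw [hB]; exact Finset.sum_congr rfl fun i _ => (sq (u₁ i.succ)).symm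
      nlinarith [this, h2]
    have hCS : P ^ 2 ≤ A * B :=
      Finset.sum_mul_sq_le_sq_mul_sq Finset.univ (fun i : Fin n => u₀ i.succ) (fun i : Fin n => u₁ i.succ)
    have ha1 : 1 ≤ a := by nlinarith
    have hb1 : 1 ≤ b := by nlinarith
    have hab : (1:ℝ) ≤ a * b := by nlinarith
    have hPle : P ≤ a * b - 1 := by nlinarith [sq_nonneg (a - b), sq_nonneg (P - (a*b - 1))]
    show -(a * b) + P ≤ -1
    linarith
  have h0 : 0 ≤ -2 * (1 + lprod u₀ u₁) := by linarith
  refine ⟨h0, fun d hd hc => ?_⟩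
  have hs : 0 ≤ Real.sinh (d / 2) := Real.sinh_nonneg_iff.mpr (by linarith)
  have hcosh : Real.cosh d = 2 * Real.sinh (d / 2) ^ 2 + 1 := by
    have := Real.cosh_sq (d / 2)
    have h2 : Real.cosh (2 * (d / 2)) = Real.cosh (d / 2) ^ 2 + Real.sinh (d / 2) ^ 2 :=
      Real.cosh_two_mul _
    have hdd : 2 * (d / 2) = d := by ring
    rw [hdd] at h2
    linarith
  have hsq : -2 * (1 + lprod u₀ u₁) = (2 * Real.sinh (d / 2)) ^ 2 := by nlinarith
  rw [hsq, Real.sqrt_sq (by linarith)]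
  ring
end

section
/- Let v ∈ H^n and let x be a positive light-like vector in R^{n+1}, with d defined by e^d = -v∘x. Then the point u = (1/2)(1 - 1/(v∘x)²)·x - (1/(v∘x))·v lies on the horosphere S determined by x (i.e., u∘u = -1 and u∘x = -1), and cosh d_H(u,v) = (1/2)(-v∘x + 1/(-v∘x)), so that d_H(u,v) = |d|. -/
/-!
Write `c = v∘x`, which is negative since `-c = e^d`, and `u = a x - c⁻¹ v` with
`a = (1 - c⁻²) / 2`. Bilinearity together with `x∘x = 0` and `v∘v = -1` gives `u∘x = -1`
and `u∘v = (c + c⁻¹) / 2`, hence `u∘u = -a - c⁻¹ (c + c⁻¹) / 2 = -1`. Finally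
`cosh |d| = cosh d = (e^d + e^{-d}) / 2 = (-c + (-c)⁻¹) / 2 = -u∘v`.
-/

section Lorentz

variable {n : ℕ}

lemma lprod_comm (x y : Fin (n + 1) → ℝ) : lprod x y = lprod y x := by
  simp only [lprod, mul_comm]

lemma lprod_smul_sub_left (a b : ℝ) (x v y : Fin (n + 1) → ℝ) :
    lprod (a • x - b • v) y = a * lprod x y - b * lprod v y := by
  simp only [lprod, Pi.sub_apply, Pi.smul_apply, smul_eq_mul, sub_mul, mul_assoc,
    Finset.sum_sub_distrib, ← Finset.mul_sum]
  ring

noncomputable def horosphereNearestPoint (v x : Fin (n + 1) → ℝ) : Fin (n + 1) → ℝ :=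
  ((1 - 1 / (lprod v x) ^ 2) / 2) • x - (1 / lprod v x) • v

variable {v x : Fin (n + 1) → ℝ}

lemma lprod_horosphereNearestPoint_right (hxx : lprod x x = 0) (hc : lprod v x ≠ 0) :
    lprod (horosphereNearestPoint v x) x = -1 := by
  rw [horosphereNearestPoint, lprod_smul_sub_left, hxx]
  field_simp
  ring

lemma lprod_horosphereNearestPoint_left (hvH : lprod v v = -1) (hc : lprod v x ≠ 0) :
    lprod (horosphereNearestPoint v x) v = (lprod v x + 1 / lprod v x) / 2 := by
  rw [horosphereNearestPoint, lprod_smul_sub_left, hvH, lprod_comm x v]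
  field_simp
  ring

lemma lprod_horosphereNearestPoint_self (hvH : lprod v v = -1) (hxx : lprod x x = 0)
    (hc : lprod v x ≠ 0) :
    lprod (horosphereNearestPoint v x) (horosphereNearestPoint v x) = -1 := by
  have hux := lprod_horosphereNearestPoint_right hxx hc
  have huv := lprod_horosphereNearestPoint_left hvH hc
  rw [lprod_comm] at hux huv
  nth_rw 1 [horosphereNearestPoint]
  rw [lprod_smul_sub_left, hux, huv]
  field_simp
  ring

end Lorentz

theorem nearest_point_on_horosphere_general {n : ℕ} (v x : Fin (n + 1) → ℝ)
    (hvH : lprod v v = -1)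
    (hxx : lprod x x = 0)
    (d : ℝ) (hd : Real.exp d = -lprod v x) :
    letI u : Fin (n + 1) → ℝ :=
      ((1 - 1 / (lprod v x) ^ 2) / 2) • x - (1 / lprod v x) • v
    lprod u u = -1 ∧ lprod u x = -1 ∧
    -lprod u v = (-lprod v x + 1 / (-lprod v x)) / 2 ∧
    Real.cosh |d| = -lprod u v := by
  have hc : lprod v x ≠ 0 := by linarith [Real.exp_pos d]
  have huv : -lprod (horosphereNearestPoint v x) v = (-lprod v x + 1 / (-lprod v x)) / 2 := by
    rw [lprod_horosphereNearestPoint_left hvH hc]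
    ring
  have hcosh : Real.cosh |d| = (-lprod v x + 1 / (-lprod v x)) / 2 := by
    rw [Real.cosh_abs, Real.cosh_eq, Real.exp_neg, hd, one_div]
  exact ⟨lprod_horosphereNearestPoint_self hvH hxx hc,
    lprod_horosphereNearestPoint_right hxx hc, huv, hcosh.trans huv.symm⟩

/-- The nearest point on a horosphere to a point `v` of `H^n`, and the signed
distance formula `e^d = -v∘x`. -/
theorem nearest_point_on_horosphere {n : ℕ} (v x : Fin (n + 1) → ℝ)
    (hvH : lprod v v = -1) (hvpos : 0 < v 0)
    (hxx : lprod x x = 0) (hx0 : 0 < x 0)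
    (d : ℝ) (hd : Real.exp d = -lprod v x) :
    letI u : Fin (n + 1) → ℝ :=
      ((1 - 1 / (lprod v x) ^ 2) / 2) • x - (1 / lprod v x) • v
    lprod u u = -1 ∧ lprod u x = -1 ∧
    -lprod u v = (-lprod v x + 1 / (-lprod v x)) / 2 ∧
    Real.cosh |d| = -lprod u v :=
  nearest_point_on_horosphere_general v x hvH hxx d hd
end

section
/- Let x₀, x₁ be linearly independent positive light-like vectors with horospheres S₀, S₁, and let f(v) = v∘x₀ on S₁. For any fixed r < 0, the set {v ∈ S₁ : f(v) ≥ r} is contained in the closed hyperbolic ball of radius cosh⁻¹(r/(x₀∘x₁) + 1/2) centered at u = (-1/(x₀∘x₁))·x₀ + (1/2)·x₁; equivalently, every v ∈ S₁ with v∘x₀ ≥ r satisfies -v∘u ≤ r/(x₀∘x₁) + 1/2. -/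
section Lorentz

variable {n : ℕ}

lemma lprod_add_right (v x y : Fin (n + 1) → ℝ) :
    lprod v (x + y) = lprod v x + lprod v y := by
  simp only [lprod, Pi.add_apply, mul_add, Finset.sum_add_distrib]
  ring

lemma lprod_smul_right (a : ℝ) (v x : Fin (n + 1) → ℝ) :
    lprod v (a • x) = a * lprod v x := by
  simp only [lprod, Pi.smul_apply, smul_eq_mul, mul_add, Finset.mul_sum]
  ring_nf

lemma lprod_smul_add_smul_self (a b : ℝ) (x y : Fin (n + 1) → ℝ) :
    lprod (a • x + b • y) (a • x + b • y) =
      a ^ 2 * lprod x x + 2 * a * b * lprod x y + b ^ 2 * lprod y y := by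
  have expand : ∀ p q : ℝ, (a * p + b * q) * (a * p + b * q) =
      a ^ 2 * (p * p) + 2 * a * b * (p * q) + b ^ 2 * (q * q) := fun _ _ => by ring
  simp only [lprod, Pi.add_apply, Pi.smul_apply, smul_eq_mul, expand, Finset.sum_add_distrib,
    ← Finset.mul_sum]
  ring

lemma lprod_self_pos_of_apply_zero {w : Fin (n + 1) → ℝ} (hw : w 0 = 0) (hne : w ≠ 0) :
    0 < lprod w w := by
  obtain ⟨i, hi⟩ : ∃ i, w i ≠ 0 := Function.ne_iff.mp hne
  obtain ⟨j, rfl⟩ := Fin.exists_succ_eq.mpr (show i ≠ 0 by rintro rfl; exact hi hw)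
  simp only [lprod, hw, mul_zero, neg_zero, zero_add]
  exact Finset.sum_pos' (fun k _ => mul_self_nonneg _)
    ⟨j, Finset.mem_univ _, mul_self_pos.mpr hi⟩

lemma lprod_neg_of_null {x y : Fin (n + 1) → ℝ} (hind : LinearIndependent ℝ ![x, y])
    (hx : lprod x x = 0) (hx₀ : 0 < x 0) (hy : lprod y y = 0) (hy₀ : 0 < y 0) :
    lprod x y < 0 := by
  set w := y 0 • x + (-x 0) • y with hw_def
  have hw₀ : w 0 = 0 := by simp [w, mul_comm]
  have hw : w ≠ 0 := fun h => hy₀.ne' (LinearIndependent.pair_iff.mp hind _ _ h).1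
  have hpos := lprod_self_pos_of_apply_zero hw₀ hw
  rw [hw_def, lprod_smul_add_smul_self, hx, hy] at hpos
  nlinarith [mul_pos hx₀ hy₀]

end Lorentz

theorem horosphere_sublevel_in_ball_general {n : ℕ} (x₀ x₁ : Fin (n + 1) → ℝ)
    (hind : LinearIndependent ℝ ![x₀, x₁])
    (h₀ : lprod x₀ x₀ = 0) (h₀pos : 0 < x₀ 0)
    (h₁ : lprod x₁ x₁ = 0) (h₁pos : 0 < x₁ 0)
    (r : ℝ)
    (v : Fin (n + 1) → ℝ)
    (hvS : lprod v x₁ = -1)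
    (hvr : r ≤ lprod v x₀) :
    -lprod v ((-1 / lprod x₀ x₁) • x₀ + (1 / 2 : ℝ) • x₁) ≤
      r / lprod x₀ x₁ + 1 / 2 := by
  have hc : lprod x₀ x₁ < 0 := lprod_neg_of_null hind h₀ h₀pos h₁ h₁pos
  have hdiv : lprod v x₀ / lprod x₀ x₁ ≤ r / lprod x₀ x₁ :=
    div_le_div_of_nonpos_of_le hc.le hvr
  calc -lprod v ((-1 / lprod x₀ x₁) • x₀ + (1 / 2 : ℝ) • x₁)
      = lprod v x₀ / lprod x₀ x₁ + 1 / 2 := by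
        rw [lprod_add_right, lprod_smul_right, lprod_smul_right, hvS]
        ring
    _ ≤ r / lprod x₀ x₁ + 1 / 2 := by linarith

/-- Sublevel-set compactness: points of `S₁` where `v∘x₀ ≥ r` lie in a fixed
closed hyperbolic ball about `u = (-1/(x₀∘x₁))x₀ + (1/2)x₁`. -/
theorem horosphere_sublevel_in_ball {n : ℕ} (x₀ x₁ : Fin (n + 1) → ℝ)
    (hind : LinearIndependent ℝ ![x₀, x₁])
    (h₀ : lprod x₀ x₀ = 0) (h₀pos : 0 < x₀ 0)
    (h₁ : lprod x₁ x₁ = 0) (h₁pos : 0 < x₁ 0)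
    (r : ℝ) (hr : r < 0)
    (v : Fin (n + 1) → ℝ)
    (hvH : lprod v v = -1) (hvpos : 0 < v 0) (hvS : lprod v x₁ = -1)
    (hvr : r ≤ lprod v x₀) :
    -lprod v ((-1 / lprod x₀ x₁) • x₀ + (1 / 2 : ℝ) • x₁) ≤
      r / lprod x₀ x₁ + 1 / 2 :=
  horosphere_sublevel_in_ball_general x₀ x₁ hind h₀ h₀pos h₁ h₁pos r v hvS hvr
end
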